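/- arXiv:2011.12511 — 4 statements merged into one kernel-verified Lean document; each statement's English description precedes it below -/
import Mathlib

section
/- Let E be a finite-dimensional real inner product space, let L : E → ℝ be differentiable and ρ-smooth for some ρ > 0, and let λ > ρ. For w ∈ E let w̃*(w) denote the unique minimizer of w̃ ↦ L(w̃) + (λ/2)‖w̃ − w‖², and define the envelope e : E → ℝ by e(w) = inf_{w̃ ∈ E} [L(w̃) + (λ/2)‖w̃ − w‖²]. Then e is differentiable and ∇e(w) = λ(w − w̃*(w)) for every w ∈ E. -/
/-!
Evaluating the objective at `w̃*(u)` in the infimum defining `e(v)` gives the quadratic upper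
model `e v ≤ e u + ⟪λ (u - w̃*(u)), v - u⟫ + λ/2 ‖v - u‖²` for all `u, v`. Used once at `w` and
once at `u`, it pins `e u - e w` to `⟪λ (w - w̃*(w)), u - w⟫` up to `o(‖u - w‖)`, provided
`w ↦ λ (w - w̃*(w))` is continuous. Continuity comes from the first-order condition
`∇L(w̃*(w)) = λ (w - w̃*(w))`: since `∇L` is `ρ`-Lipschitz and `ρ < λ`, it makes `w̃*` Lipschitz
with constant `|λ| / (λ - ρ)`.
-/

open InnerProductSpace Set Filter Asymptotics
open scoped RealInnerProductSpace Gradient Topology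

section

variable {E : Type*} [NormedAddCommGroup E] [InnerProductSpace ℝ E]

theorem gradient_eq_smul_sub_of_isLocalMin_add_sq [CompleteSpace E] {L : E → ℝ} {lam : ℝ}
    {w x : E} (hL : DifferentiableAt ℝ L x)
    (hmin : IsLocalMin (fun v => L v + lam / 2 * ‖v - w‖ ^ 2) x) :
    ∇ L x = lam • (w - x) := by
  have hF := hL.hasGradientAt.hasFDerivAt.add
    (((hasFDerivAt_id x).sub_const w).norm_sq.const_mul (lam / 2))
  set d := ∇ L x - lam • (w - x)
  have hd : ⟪d, d⟫ = 0 := by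
    have h := congrArg (fun φ => φ d) (hmin.hasFDerivAt_eq_zero hF)
    simp only [toDual_apply_apply, id_eq, map_sub, ContinuousLinearMap.comp_id, add_apply,
      smul_apply, sub_apply, coe_innerSL_apply, nsmul_eq_mul, Nat.cast_ofNat, smul_eq_mul,
      zero_apply] at h
    rw [inner_sub_left, real_inner_smul_left, inner_sub_left]
    linarith
  exact sub_eq_zero.mp (inner_self_eq_zero.mp hd)

theorem lipschitzWith_of_map_eq_smul_sub {G P : E → E} {ρ lam : ℝ}
    (hG : ∀ x y, ‖G x - G y‖ ≤ ρ * ‖x - y‖) (hρ : ρ < lam)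
    (hP : ∀ w, G (P w) = lam • (w - P w)) :
    LipschitzWith (|lam| / (lam - ρ)).toNNReal P := by
  refine .of_dist_le' fun w u => ?_
  rw [dist_eq_norm, dist_eq_norm, div_mul_eq_mul_div, le_div_iff₀ (sub_pos.mpr hρ)]
  have h := hG (P w) (P u)
  rw [hP, hP, show lam • (w - P w) - lam • (u - P u) = lam • (w - u) - lam • (P w - P u) by
    simp only [smul_sub]; abel] at h
  have h' := (norm_sub_norm_le (lam • (P w - P u)) (lam • (w - u))).trans
    ((norm_sub_rev _ _).le.trans h)
  rw [norm_smul, norm_smul, Real.norm_eq_abs] at h'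
  nlinarith [le_abs_self lam, norm_nonneg (P w - P u)]

theorem hasGradientAt_of_forall_le_add_inner_add_sq [CompleteSpace E] {f : E → ℝ} {G : E → E}
    {c : ℝ} {w : E} (hG : ContinuousAt G w)
    (hf : ∀ u v, f v ≤ f u + ⟪G u, v - u⟫ + c * ‖v - u‖ ^ 2) :
    HasGradientAt f (G w) w := by
  rw [hasGradientAt_iff_isLittleO, ← isLittleO_norm_right]
  -- The bound at `w` and the bound at `u` sandwich `f u - f w - ⟪G w, u - w⟫` between
  -- `⟪G u - G w, u - w⟫ - c ‖u - w‖²` and `c ‖u - w‖²`.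
  have hbound : ∀ u, |f u - f w - ⟪G w, u - w⟫|
      ≤ (‖G u - G w‖ + |c| * ‖u - w‖) * ‖u - w‖ := by
    intro u
    have hup := hf w u
    have hlow := hf u w
    have hcs := abs_real_inner_le_norm (G u - G w) (u - w)
    rw [inner_sub_left, abs_le] at hcs
    rw [show w - u = -(u - w) by abel, norm_neg, inner_neg_right] at hlow
    rw [abs_le]
    constructor <;> nlinarith [abs_nonneg c, le_abs_self c, neg_abs_le c, sq_nonneg ‖u - w‖]
  have hsmall : Tendsto (fun u => ‖G u - G w‖ + |c| * ‖u - w‖) (𝓝 w) (𝓝 0) := by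
    have h1 : Tendsto (fun u => ‖G u - G w‖) (𝓝 w) (𝓝 0) :=
      tendsto_iff_norm_sub_tendsto_zero.mp hG
    have h2 : Tendsto (fun u => ‖u - w‖) (𝓝 w) (𝓝 0) :=
      tendsto_iff_norm_sub_tendsto_zero.mp tendsto_id
    simpa using h1.add (h2.const_mul |c|)
  refine IsBigO.trans_isLittleO (IsBigO.of_bound 1 (Eventually.of_forall fun u => ?_))
    (((isLittleO_one_iff ℝ).mpr hsmall).mul_isBigO (isBigO_refl (fun u => ‖u - w‖) _)
      |>.congr_right fun u => one_mul _)
  rw [Real.norm_eq_abs, Real.norm_eq_abs, abs_mul, abs_norm, one_mul]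
  exact (hbound u).trans (by gcongr; exact le_abs_self _)

theorem envelope_le_add_inner_add_sq {L e : E → ℝ} {P : E → E} {lam : ℝ}
    (hP : ∀ w, IsMinOn (fun v => L v + lam / 2 * ‖v - w‖ ^ 2) univ (P w))
    (he : ∀ w, e w = ⨅ v, L v + lam / 2 * ‖v - w‖ ^ 2) (u v : E) :
    e v ≤ e u + ⟪lam • (u - P u), v - u⟫ + lam / 2 * ‖v - u‖ ^ 2 := by
  have he_eq : ∀ w, e w = L (P w) + lam / 2 * ‖P w - w‖ ^ 2 := fun w =>
    (he w).trans <| le_antisymm (ciInf_le ⟨_, forall_mem_range.mpr fun v => hP w (mem_univ v)⟩ _)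
      (le_ciInf fun v => hP w (mem_univ v))
  have hev : e v ≤ L (P u) + lam / 2 * ‖P u - v‖ ^ 2 := by
    rw [he_eq v]; exact hP v (mem_univ _)
  have hexp : ‖P u - v‖ ^ 2 = ‖P u - u‖ ^ 2 - 2 * ⟪P u - u, v - u⟫ + ‖v - u‖ ^ 2 := by
    rw [show P u - v = (P u - u) - (v - u) by abel]; exact norm_sub_sq_real _ _
  have hinner : ⟪lam • (u - P u), v - u⟫ = -lam * ⟪P u - u, v - u⟫ := by
    rw [real_inner_smul_left, ← neg_sub, inner_neg_left]; ring
  rw [hexp] at hev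
  rw [he_eq u, hinner]
  linarith

end

theorem stmt_3_general {E : Type*} [NormedAddCommGroup E] [InnerProductSpace ℝ E]
    [FiniteDimensional ℝ E]
    (L : E → ℝ) (ρ lam : ℝ)
    (hdiff : Differentiable ℝ L)
    (hsmooth : ∀ x y : E, ‖gradient L x - gradient L y‖ ≤ ρ * ‖x - y‖)
    (hlam : ρ < lam)
    (wstar : E → E)
    (hwstar : ∀ w : E, IsMinOn (fun w' : E => L w' + lam / 2 * ‖w' - w‖ ^ 2) Set.univ (wstar w))
    (e : E → ℝ)
    (he : ∀ w : E, e w = ⨅ w' : E, (L w' + lam / 2 * ‖w' - w‖ ^ 2)) :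
    Differentiable ℝ e ∧ ∀ w : E, gradient e w = lam • (w - wstar w) := by
  have hstat : ∀ w, ∇ L (wstar w) = lam • (w - wstar w) := fun w =>
    gradient_eq_smul_sub_of_isLocalMin_add_sq (hdiff _) ((hwstar w).isLocalMin univ_mem)
  have hlip := lipschitzWith_of_map_eq_smul_sub hsmooth hlam hstat
  have hcont : Continuous fun w => lam • (w - wstar w) :=
    (continuous_id.sub hlip.continuous).const_smul lam
  have hgrad : ∀ w, HasGradientAt e (lam • (w - wstar w)) w := fun w =>
    hasGradientAt_of_forall_le_add_inner_add_sq hcont.continuousAt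
      (envelope_le_add_inner_add_sq hwstar he)
  exact ⟨fun w => (hgrad w).differentiableAt, fun w => (hgrad w).gradient⟩

/-- The Moreau-type envelope `e(w) = inf_{w̃} [L(w̃) + (λ/2)‖w̃ − w‖²]` of a differentiable
`ρ`-smooth function `L` with `λ > ρ` is differentiable with `∇e(w) = λ(w − w̃*(w))`,
where `w̃*(w)` is the (unique) minimizer of `w̃ ↦ L(w̃) + (λ/2)‖w̃ − w‖²`. -/
theorem stmt_3 {E : Type*} [NormedAddCommGroup E] [InnerProductSpace ℝ E]
    [FiniteDimensional ℝ E]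
    (L : E → ℝ) (ρ lam : ℝ) (hρ : 0 < ρ)
    (hdiff : Differentiable ℝ L)
    (hsmooth : ∀ x y : E, ‖gradient L x - gradient L y‖ ≤ ρ * ‖x - y‖)
    (hlam : ρ < lam)
    (wstar : E → E)
    (hwstar : ∀ w : E, IsMinOn (fun w' : E => L w' + lam / 2 * ‖w' - w‖ ^ 2) Set.univ (wstar w))
    (e : E → ℝ)
    (he : ∀ w : E, e w = ⨅ w' : E, (L w' + lam / 2 * ‖w' - w‖ ^ 2)) :
    Differentiable ℝ e ∧ ∀ w : E, gradient e w = lam • (w - wstar w) :=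
  stmt_3_general L ρ lam hdiff hsmooth hlam wstar hwstar e he
end

section
/- Let E be a finite-dimensional real inner product space and X ⊆ E a nonempty convex set. Let h : E → ℝ be differentiable and convex, and for x, z ∈ E define the Bregman divergence V(x, z) = h(z) − h(x) − ⟪∇h(x), z − x⟫. Let p : E → ℝ be convex, let μ₁, μ₂ ≥ 0, let x̃, ỹ ∈ X, and suppose u* ∈ X minimizes u ↦ p(u) + μ₁V(x̃, u) + μ₂V(ỹ, u) over X. Then for every u ∈ X: p(u*) + μ₁V(x̃, u*) + μ₂V(ỹ, u*) ≤ p(u) + μ₁V(x̃, u) + μ₂V(ỹ, u) − (μ₁ + μ₂)V(u*, u). -/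
open RealInnerProductSpace

/-!
The three-point identity `V(x,u) - V(x,u*) - V(u*,u) = ⟪∇h(u*) - ∇h(x), u - u*⟫` reduces the
claim to the first-order optimality condition `p(u*) ≤ p(u) + ⟪∇g(u*), u - u*⟫` for the minimizer
`u*` of `p + g` over `X`, where `g = μ₁ V(x̃,·) + μ₂ V(ỹ,·)` is differentiable. By convexity of `p`,
`f(t) = g(u* + t(u - u*)) + t (p(u) - p(u*))` satisfies `f(t) ≥ (p + g)(u* + t(u - u*)) - p(u*)`,
so `f` is minimal on `[0, 1]` at `0`, and Fermat's rule `f'(0) ≥ 0` is the condition.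
-/

section Bregman

variable {E : Type*} [NormedAddCommGroup E] [InnerProductSpace ℝ E] [CompleteSpace E]

noncomputable def bregman (h : E → ℝ) (x z : E) : ℝ := h z - h x - ⟪gradient h x, z - x⟫

theorem bregman_sub_bregman_sub_bregman (h : E → ℝ) (x a u : E) :
    bregman h x u - bregman h x a - bregman h a u = ⟪gradient h a - gradient h x, u - a⟫ := by
  simp only [bregman, inner_sub_left, inner_sub_right]
  ring

theorem hasFDerivAt_bregman {h : E → ℝ} {z : E} (hd : DifferentiableAt ℝ h z) (x : E) :
    HasFDerivAt (bregman h x) (innerSL ℝ (gradient h z - gradient h x)) z := by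
  have hh : HasFDerivAt h (innerSL ℝ (gradient h z)) z := hd.hasGradientAt.hasFDerivAt
  have hlin : HasFDerivAt (fun y => ⟪gradient h x, y - x⟫) (innerSL ℝ (gradient h x)) z :=
    ((innerSL ℝ (gradient h x)).hasFDerivAt.comp z ((hasFDerivAt_id z).sub_const x)).congr_fderiv
      (by ext; simp)
  rw [map_sub]
  exact (hh.sub_const (h x)).sub hlin

end Bregman

theorem IsMinOn.le_add_fderiv_of_convexOn_add {E : Type*} [NormedAddCommGroup E]
    [NormedSpace ℝ E] {X : Set E} {p g : E → ℝ} {g' : StrongDual ℝ E} {a u : E}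
    (hX : Convex ℝ X) (hp : ConvexOn ℝ X p) (hg : HasFDerivAt g g' a)
    (hmin : IsMinOn (fun x => p x + g x) X a) (ha : a ∈ X) (hu : u ∈ X) :
    p a ≤ p u + g' (u - a) := by
  set f : ℝ → ℝ := fun t => g (a + t • (u - a)) + t * (p u - p a)
  have hf : HasDerivAt f (g' (u - a) + (p u - p a)) 0 := by
    have hline : HasDerivAt (fun t : ℝ => a + t • (u - a)) (u - a) 0 := by
      simpa using ((hasDerivAt_id (0 : ℝ)).smul_const (u - a)).const_add a
    have hg0 : HasFDerivAt g g' (a + (0 : ℝ) • (u - a)) := by simpa using hg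
    exact ((hg0.comp_hasDerivAt 0 hline).add
      ((hasDerivAt_id (0 : ℝ)).mul_const (p u - p a))).congr_deriv (by simp)
  have hfmin : IsMinOn f (Set.Icc 0 1) 0 := by
    intro t ⟨ht0, ht1⟩
    have hseg : a + t • (u - a) = (1 - t) • a + t • u := by
      simp only [smul_sub, sub_smul, one_smul]; abel
    have hmem : a + t • (u - a) ∈ X := hseg ▸ hX ha hu (by linarith) ht0 (by ring)
    have hpt : p (a + t • (u - a)) ≤ (1 - t) * p a + t * p u := by
      simpa [hseg] using hp.2 ha hu (by linarith) ht0 (by ring)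
    have hobj : p a + g a ≤ p (a + t • (u - a)) + g (a + t • (u - a)) := hmin hmem
    simp only [Set.mem_ofPred_eq, f, zero_smul, add_zero, zero_mul]
    linarith
  have hone : (1 : ℝ) ∈ posTangentConeAt (Set.Icc (0 : ℝ) 1) 0 :=
    mem_posTangentConeAt_of_segment_subset (by simp [segment_eq_Icc])
  have hfermat := hfmin.localize.hasFDerivWithinAt_nonneg hf.hasFDerivAt.hasFDerivWithinAt hone
  rw [ContinuousLinearMap.toSpanSingleton_apply, one_smul] at hfermat
  linarith

theorem stmt_8_general {E : Type*} [NormedAddCommGroup E] [InnerProductSpace ℝ E]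
    [FiniteDimensional ℝ E]
    (X : Set E) (hXconv : Convex ℝ X)
    (h : E → ℝ) (hdiff : Differentiable ℝ h)
    (V : E → E → ℝ)
    (hV : ∀ x z : E, V x z = h z - h x - ⟪gradient h x, z - x⟫)
    (p : E → ℝ) (hp : ConvexOn ℝ X p)
    (μ₁ μ₂ : ℝ)
    (xt yt : E)
    (ustar : E) (hustar : ustar ∈ X)
    (hmin : IsMinOn (fun u : E => p u + μ₁ * V xt u + μ₂ * V yt u) X ustar) :
    ∀ u ∈ X,
      p ustar + μ₁ * V xt ustar + μ₂ * V yt ustar ≤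
        p u + μ₁ * V xt u + μ₂ * V yt u - (μ₁ + μ₂) * V ustar u := by
  intro u hu
  obtain rfl : V = bregman h := funext₂ hV
  set G := μ₁ • (gradient h ustar - gradient h xt) + μ₂ • (gradient h ustar - gradient h yt)
  have hG : HasFDerivAt (fun z => μ₁ * bregman h xt z + μ₂ * bregman h yt z) (innerSL ℝ G)
      ustar := by
    refine (((hasFDerivAt_bregman (hdiff ustar) xt).const_mul μ₁).add
      ((hasFDerivAt_bregman (hdiff ustar) yt).const_mul μ₂)).congr_fderiv ?_
    ext v
    simp [G]
  have hopt : p ustar ≤ p u + ⟪G, u - ustar⟫ :=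
    IsMinOn.le_add_fderiv_of_convexOn_add hXconv hp hG (by simpa only [add_assoc] using hmin)
      hustar hu
  have hx := bregman_sub_bregman_sub_bregman h xt ustar u
  have hy := bregman_sub_bregman_sub_bregman h yt ustar u
  simp only [G, inner_add_left, real_inner_smul_left] at hopt
  linear_combination hopt - μ₁ * hx - μ₂ * hy

/-- Three-point lemma for Bregman divergences (Ghadimi–Lan): if `u*` minimizes
`u ↦ p(u) + μ₁V(x̃,u) + μ₂V(ỹ,u)` over a nonempty convex set `X`, where
`V(x,z) = h(z) − h(x) − ⟪∇h(x), z − x⟫` is the Bregman divergence of a differentiable convex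
`h` and `p` is convex, then for all `u ∈ X`,
`p(u*) + μ₁V(x̃,u*) + μ₂V(ỹ,u*) ≤ p(u) + μ₁V(x̃,u) + μ₂V(ỹ,u) − (μ₁+μ₂)V(u*,u)`. -/
theorem stmt_8 {E : Type*} [NormedAddCommGroup E] [InnerProductSpace ℝ E]
    [FiniteDimensional ℝ E]
    (X : Set E) (hXne : X.Nonempty) (hXconv : Convex ℝ X)
    (h : E → ℝ) (hdiff : Differentiable ℝ h) (hconv : ConvexOn ℝ Set.univ h)
    (V : E → E → ℝ)
    (hV : ∀ x z : E, V x z = h z - h x - ⟪gradient h x, z - x⟫)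
    (p : E → ℝ) (hp : ConvexOn ℝ X p)
    (μ₁ μ₂ : ℝ) (hμ₁ : 0 ≤ μ₁) (hμ₂ : 0 ≤ μ₂)
    (xt yt : E) (hxt : xt ∈ X) (hyt : yt ∈ X)
    (ustar : E) (hustar : ustar ∈ X)
    (hmin : IsMinOn (fun u : E => p u + μ₁ * V xt u + μ₂ * V yt u) X ustar) :
    ∀ u ∈ X,
      p ustar + μ₁ * V xt ustar + μ₂ * V yt ustar ≤
        p u + μ₁ * V xt u + μ₂ * V yt u - (μ₁ + μ₂) * V ustar u :=
  stmt_8_general X hXconv h hdiff V hV p hp μ₁ μ₂ xt yt ustar hustar hmin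
end

section
/- Let E be a finite-dimensional real inner product space, let H : E → ℝ be convex, let G′, δ, w^pr ∈ E, set g = G′ + δ, and let 0 < β ≤ 1. Let w^ag = prox_{βH}(w^pr − βg), i.e., the unique minimizer of u ↦ H(u) + (1/(2β))‖u − (w^pr − βg)‖². Then for every w ∈ E: ⟪G′, w^ag − w⟫ ≤ H(w) − H(w^ag) + (1/(2β))(‖w^pr − w‖² − ‖w^ag − w^pr‖²) + (1/2)‖δ‖². -/
open RealInnerProductSpace Filter Topology

/-!
Adding `c‖· - v‖²` to a convex function makes it `2c`-strongly convex, and a minimizer `x` of an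
`m`-strongly convex function `F` satisfies the quadratic growth bound
`F x + m/2 ‖w - x‖² ≤ F w`. For `F = H + (1/(2β))‖· - (w^pr - βg)‖²`, expanding the square around
`w^pr` turns this into the claim with an extra term `⟪w - w^ag, δ⟫`, which Young's inequality
absorbs into `(1/2)‖δ‖²` and the growth term `(1/(2β))‖w - w^ag‖²`, since `1/(2β) ≥ 1/2`.
-/

section InnerProductSpace

variable {E : Type*} [NormedAddCommGroup E] [InnerProductSpace ℝ E]

lemma ConvexOn.strongConvexOn_add_mul_norm_sub_sq {s : Set E} {f : E → ℝ}
    (hf : ConvexOn ℝ s f) (c : ℝ) (v : E) :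
    StrongConvexOn s (2 * c) fun u ↦ f u + c * ‖u - v‖ ^ 2 := by
  rw [strongConvexOn_iff_convex]
  have haffine : ConvexOn ℝ s fun u ↦ -(2 * c) * ⟪v, u⟫ + c * ‖v‖ ^ 2 :=
    (((-(2 * c)) • innerSL ℝ v).toLinearMap.convexOn hf.1).add_const _
  refine (hf.add haffine).congr fun u _ ↦ ?_
  rw [Pi.add_apply, norm_sub_sq_real, real_inner_comm]
  ring

lemma UniformConvexOn.le_sub_of_isMinOn {s : Set E} {φ : ℝ → ℝ} {f : E → ℝ} {x y : E}
    (hf : UniformConvexOn s φ f) (hmin : IsMinOn f s x) (hx : x ∈ s) (hy : y ∈ s) :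
    φ ‖x - y‖ ≤ f y - f x := by
  have hweighted : ∀ a ∈ Set.Ioo (0 : ℝ) 1, a * φ ‖x - y‖ ≤ f y - f x := by
    rintro a ⟨ha0, ha1⟩
    have hb : 0 ≤ 1 - a := sub_nonneg.2 ha1.le
    have hab : a + (1 - a) = 1 := add_sub_cancel a 1
    have hconv := hf.2 hx hy ha0.le hb hab
    have hle := hmin (hf.1 hx hy ha0.le hb hab)
    rw [smul_eq_mul, smul_eq_mul] at hconv
    have : (1 - a) * (a * φ ‖x - y‖) ≤ (1 - a) * (f y - f x) := by
      linarith [show f x ≤ f (a • x + (1 - a) • y) from hle]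
    exact le_of_mul_le_mul_left this (sub_pos.2 ha1)
  have hlim : Tendsto (fun a : ℝ ↦ a * φ ‖x - y‖) (𝓝[<] 1) (𝓝 (φ ‖x - y‖)) := by
    simpa using ((continuous_id.tendsto (1 : ℝ)).mono_left nhdsWithin_le_nhds).mul_const
      (φ ‖x - y‖)
  exact le_of_tendsto hlim (eventually_of_mem (Ioo_mem_nhdsLT zero_lt_one) hweighted)

lemma norm_sub_sub_sq_sub_norm_sub_sub_sq (w x p b : E) :
    ‖w - (p - b)‖ ^ 2 - ‖x - (p - b)‖ ^ 2 = ‖w - p‖ ^ 2 - ‖x - p‖ ^ 2 + 2 * ⟪w - x, b⟫ := by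
  rw [sub_sub_eq_add_sub, add_sub_right_comm, sub_sub_eq_add_sub, add_sub_right_comm,
    norm_add_sq_real, norm_add_sq_real]
  simp only [inner_sub_left]
  ring

lemma real_inner_le_half_norm_sq_add_half_norm_sq (x y : E) :
    ⟪x, y⟫ ≤ 1 / 2 * ‖x‖ ^ 2 + 1 / 2 * ‖y‖ ^ 2 := by
  nlinarith [norm_sub_sq_real x y, sq_nonneg ‖x - y‖]

end InnerProductSpace

theorem stmt_10_general {E : Type*} [NormedAddCommGroup E] [InnerProductSpace ℝ E]
    (H : E → ℝ) (hH : ConvexOn ℝ Set.univ H)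
    (G' δ wpr : E) (β : ℝ) (hβ0 : 0 < β) (hβ1 : β ≤ 1)
    (wag : E)
    (hwag : IsMinOn
      (fun u : E => H u + 1 / (2 * β) * ‖u - (wpr - β • (G' + δ))‖ ^ 2) Set.univ wag) :
    ∀ w : E, ⟪G', wag - w⟫ ≤
      H w - H wag + 1 / (2 * β) * (‖wpr - w‖ ^ 2 - ‖wag - wpr‖ ^ 2) + 1 / 2 * ‖δ‖ ^ 2 := by
  intro w
  set c := 1 / (2 * β) with hc
  set v := wpr - β • (G' + δ)
  have hgrowth : c * ‖w - wag‖ ^ 2 ≤ H w - H wag + c * (‖w - v‖ ^ 2 - ‖wag - v‖ ^ 2) := by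
    have := (hH.strongConvexOn_add_mul_norm_sub_sq c v).le_sub_of_isMinOn hwag
      (Set.mem_univ wag) (Set.mem_univ w)
    rw [norm_sub_rev wag w] at this
    linarith
  have hcβ : c * (2 * β) = 1 := by rw [hc]; field_simp
  have hshift : c * (‖w - v‖ ^ 2 - ‖wag - v‖ ^ 2) =
      c * (‖wpr - w‖ ^ 2 - ‖wag - wpr‖ ^ 2) + ⟪w - wag, G'⟫ + ⟪w - wag, δ⟫ := by
    rw [norm_sub_sub_sq_sub_norm_sub_sub_sq, inner_smul_right, inner_add_right, norm_sub_rev w wpr]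
    linear_combination (⟪w - wag, G'⟫ + ⟪w - wag, δ⟫) * hcβ
  have hδ : ⟪w - wag, δ⟫ - c * ‖w - wag‖ ^ 2 ≤ 1 / 2 * ‖δ‖ ^ 2 := by
    have hc_half : 1 / 2 ≤ c := by rw [hc]; gcongr; linarith
    linarith [real_inner_le_half_norm_sq_add_half_norm_sq (w - wag) δ,
      mul_le_mul_of_nonneg_right hc_half (sq_nonneg ‖w - wag‖)]
  have hG' : ⟪G', wag - w⟫ = -⟪w - wag, G'⟫ := by
    rw [real_inner_comm, ← inner_neg_left, neg_sub]
  linarith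

/-- Bound on the aggregated proximal step (second half of Lemma on proximal updates): with
`g = G′ + δ`, `0 < β ≤ 1`, and `w^ag = prox_{βH}(w^pr − βg)` for convex `H`, every `w` satisfies
`⟪G′, w^ag − w⟫ ≤ H(w) − H(w^ag) + (1/(2β))(‖w^pr − w‖² − ‖w^ag − w^pr‖²) + (1/2)‖δ‖²`. -/
theorem stmt_10 {E : Type*} [NormedAddCommGroup E] [InnerProductSpace ℝ E]
    [FiniteDimensional ℝ E]
    (H : E → ℝ) (hH : ConvexOn ℝ Set.univ H)
    (G' δ wpr : E) (β : ℝ) (hβ0 : 0 < β) (hβ1 : β ≤ 1)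
    (wag : E)
    (hwag : IsMinOn
      (fun u : E => H u + 1 / (2 * β) * ‖u - (wpr - β • (G' + δ))‖ ^ 2) Set.univ wag) :
    ∀ w : E, ⟪G', wag - w⟫ ≤
      H w - H wag + 1 / (2 * β) * (‖wpr - w‖ ^ 2 - ‖wag - wpr‖ ^ 2) + 1 / 2 * ‖δ‖ ^ 2 :=
  stmt_10_general H hH G' δ wpr β hβ0 hβ1 wag hwag
end

section
/- Let E be a real inner product space, let C > 0, and let G : E → ℝ be differentiable with ∇G Lipschitz with constant C. Let α ∈ [0, 1], let w, w′, w^ag ∈ E, and set w^pr = α w′ + (1 − α) w^ag. Then G(w^pr) − [(1 − α)G(w^ag) + αG(w)] ≤ ⟪∇G(w^pr), w^pr − ((1 − α)w^ag + αw)⟫ + (C/2)(1 − α)α²‖w^ag − w′‖² + (Cα/2)‖w − w^pr‖². -/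
/-!
Write `L_x(y) = G x + G'(x)(y - x)` for the tangent model. Along the segment from `x` to `y` the
derivative of `G` drifts from `G'(x)` by at most `C t ‖y - x‖` at time `t`, and integrating this
drift gives `G y ≥ L_x(y) - (C/2)‖y - x‖²`. Applied at `x = w^pr` with `y = w^ag` and `y = w`,
and averaged with weights `1 - α` and `α`, the two tangent terms combine to the inner-product
term of the statement, while `w^ag - w^pr = α (w^ag - w')` produces the factor `α²`.
-/

open Set

lemma add_sub_half_mul_le_of_hasDerivAt {f f' : ℝ → ℝ} (hf : ∀ t, HasDerivAt f (f' t) t)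
    {a K : ℝ} (hf' : ∀ t ∈ Ioo (0 : ℝ) 1, a - K * t ≤ f' t) :
    f 0 + a - K / 2 ≤ f 1 := by
  let φ : ℝ → ℝ := fun t ↦ f t - a * t + K / 2 * t ^ 2
  have hφ : ∀ t, HasDerivAt φ (f' t - a + K * t) t := fun t ↦
    (((hf t).sub ((hasDerivAt_id t).const_mul a)).add
      ((hasDerivAt_pow 2 t).const_mul (K / 2))).congr_deriv (by norm_num; ring)
  have hmono : MonotoneOn φ (Icc 0 1) := by
    refine monotoneOn_of_hasDerivWithinAt_nonneg (convex_Icc 0 1)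
      (fun t _ ↦ (hφ t).continuousAt.continuousWithinAt)
      (fun t _ ↦ (hφ t).hasDerivWithinAt) fun t ht ↦ ?_
    rw [interior_Icc] at ht
    linarith [hf' t ht]
  have := hmono (left_mem_Icc.2 zero_le_one) (right_mem_Icc.2 zero_le_one) zero_le_one
  simp only [φ] at this
  linarith

section LipschitzGradient

variable {E : Type*} [NormedAddCommGroup E] [NormedSpace ℝ E]

lemma add_fderiv_sub_sub_sq_le_of_lipschitz_fderiv {C : ℝ} {G : E → ℝ}
    (hG : Differentiable ℝ G) (hG' : ∀ x y : E, ‖fderiv ℝ G x - fderiv ℝ G y‖ ≤ C * ‖x - y‖)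
    (x y : E) :
    G x + fderiv ℝ G x (y - x) - C / 2 * ‖y - x‖ ^ 2 ≤ G y := by
  set v := y - x
  have hpath : ∀ t : ℝ, HasDerivAt (fun t : ℝ ↦ G (x + t • v)) (fderiv ℝ G (x + t • v) v) t :=
    fun t ↦ (hG _).hasFDerivAt.comp_hasDerivAt t
      (by simpa using ((hasDerivAt_id t).smul_const v).const_add x)
  have hdrift : ∀ t ∈ Ioo (0 : ℝ) 1,
      fderiv ℝ G x v - C * ‖v‖ ^ 2 * t ≤ fderiv ℝ G (x + t • v) v := fun t ht ↦ by
    have hle : (fderiv ℝ G x - fderiv ℝ G (x + t • v)) v ≤ C * ‖v‖ ^ 2 * t :=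
      calc (fderiv ℝ G x - fderiv ℝ G (x + t • v)) v
          ≤ ‖fderiv ℝ G x - fderiv ℝ G (x + t • v)‖ * ‖v‖ :=
            (Real.le_norm_self _).trans (ContinuousLinearMap.le_opNorm _ v)
        _ ≤ C * ‖x - (x + t • v)‖ * ‖v‖ := by gcongr; exact hG' _ _
        _ = C * ‖v‖ ^ 2 * t := by
          rw [sub_add_cancel_left, norm_neg, norm_smul, Real.norm_of_nonneg ht.1.le]; ring
    rw [sub_apply] at hle
    linarith
  have := add_sub_half_mul_le_of_hasDerivAt hpath hdrift
  simp only [zero_smul, add_zero, one_smul, add_sub_cancel, v] at this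
  linarith

end LipschitzGradient

theorem stmt_16_general {E : Type*} [NormedAddCommGroup E] [InnerProductSpace ℝ E]
    (C : ℝ)
    (G : E → ℝ) (hGdiff : Differentiable ℝ G)
    (hGlip : ∀ x y : E, ‖fderiv ℝ G x - fderiv ℝ G y‖ ≤ C * ‖x - y‖)
    (α : ℝ) (hα0 : 0 ≤ α) (hα1 : α ≤ 1)
    (w w' wag : E) (wpr : E) (hpr : wpr = α • w' + (1 - α) • wag) :
    G wpr - ((1 - α) * G wag + α * G w) ≤
      fderiv ℝ G wpr (wpr - ((1 - α) • wag + α • w))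
        + C / 2 * (1 - α) * α ^ 2 * ‖wag - w'‖ ^ 2
        + C * α / 2 * ‖w - wpr‖ ^ 2 := by
  have hag := add_fderiv_sub_sub_sq_le_of_lipschitz_fderiv hGdiff hGlip wpr wag
  have hw := add_fderiv_sub_sub_sq_le_of_lipschitz_fderiv hGdiff hGlip wpr w
  have hnorm : ‖wag - wpr‖ ^ 2 = α ^ 2 * ‖wag - w'‖ ^ 2 := by
    rw [show wag - wpr = α • (wag - w') by rw [hpr]; module, norm_smul,
      Real.norm_of_nonneg hα0, mul_pow]
  have htangent : (1 - α) * fderiv ℝ G wpr (wag - wpr) + α * fderiv ℝ G wpr (w - wpr)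
      = -fderiv ℝ G wpr (wpr - ((1 - α) • wag + α • w)) := by
    rw [← smul_eq_mul, ← smul_eq_mul, ← map_smul, ← map_smul, ← map_add, ← map_neg]
    congr 1
    module
  rw [hnorm] at hag
  linear_combination (1 - α) * hag + α * hw - htangent

/-- Descent-type inequality for a `C`-smooth function `G` at the extrapolated point
`w^pr = αw′ + (1−α)w^ag`:
`G(w^pr) − [(1−α)G(w^ag) + αG(w)] ≤ ⟪∇G(w^pr), w^pr − ((1−α)w^ag + αw)⟫
  + (C/2)(1−α)α²‖w^ag − w′‖² + (Cα/2)‖w − w^pr‖²`.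
The inner product with the gradient is expressed via the Fréchet derivative. -/
theorem stmt_16 {E : Type*} [NormedAddCommGroup E] [InnerProductSpace ℝ E]
    (C : ℝ) (hC : 0 < C)
    (G : E → ℝ) (hGdiff : Differentiable ℝ G)
    (hGlip : ∀ x y : E, ‖fderiv ℝ G x - fderiv ℝ G y‖ ≤ C * ‖x - y‖)
    (α : ℝ) (hα0 : 0 ≤ α) (hα1 : α ≤ 1)
    (w w' wag : E) (wpr : E) (hpr : wpr = α • w' + (1 - α) • wag) :
    G wpr - ((1 - α) * G wag + α * G w) ≤
      fderiv ℝ G wpr (wpr - ((1 - α) • wag + α • w))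
        + C / 2 * (1 - α) * α ^ 2 * ‖wag - w'‖ ^ 2
        + C * α / 2 * ‖w - wpr‖ ^ 2 :=
  stmt_16_general C G hGdiff hGlip α hα0 hα1 w w' wag wpr hpr
end
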